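/- If G is a Q-game, then G + G + G is a Q-game. More specifically, if G is a Q-game then G + G + G is not an O-game (i.e. not of type 2). -/

import Mathlib

/-- Three-player impartial games: well-founded game trees. -/
inductive G3 : Type 1 where
  | mk : (ι : Type) → (ι → G3) → G3

namespace G3

/-- The index type of options (moves) of a game. -/
def moves : G3 → Type
  | mk ι _ => ι

/-- The option of a game corresponding to a move. -/
def moveFn : (g : G3) → moves g → G3
  | mk _ f => f

/-- Disjunctive sum: move in exactly one component. -/
noncomputable def add : G3 → G3 → G3 :=
  G3.rec (fun ι f ihf =>
    G3.rec (fun κ g ihg =>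
      mk (ι ⊕ κ) (fun x =>
        match x with
        | Sum.inl i => ihf i (mk κ g)
        | Sum.inr j => ihg j)))

/-- The four outcome types of a three-player impartial game. -/
inductive PType : Type
  | N | O | P | Q
deriving DecidableEq

open Classical in
/-- The type of a game: `N` iff some option is a `P`-game; `O` iff it has at least
one option and all options are `N`-games; `P` iff all options are `O`-games;
`Q` otherwise. -/
noncomputable def typ : G3 → PType
  | mk ι f =>
    if ∃ i, typ (f i) = PType.P then PType.N
    else if Nonempty ι ∧ ∀ i, typ (f i) = PType.N then PType.O
    else if ∀ i, typ (f i) = PType.O then PType.P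
    else PType.Q

/-- The Nim heap of size `n`: options are heaps of sizes `0, …, n-1`. -/
def nim : ℕ → G3
  | n => mk (Fin n) (fun i => nim i)
termination_by n => n
decreasing_by exact i.isLt

/-- The sum of `n` Nim heaps of size 1. -/
noncomputable def ones : ℕ → G3
  | 0 => nim 0
  | n + 1 => add (ones n) (nim 1)

/-!
The type of a game depends only on the set of types of its options (`typ_mk`). The table
`sumTypes a b` bounds the type of a sum of games of types `a` and `b`. This is proved by induction
on both summands, and the inductive step is a finite check on the option-type sets of the two
summands; for a sum `G + H` of type `P` it also needs the sums `G' + H'` of an option of each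
summand. In particular a sum with a `Q`-summand is never a `P`-game, and by associativity and
commutativity the same holds for three summands.

If `G` is a `Q`-game, every option of `G + G + G` still contains two summands `G`, and so does
every option of its option `G + G + G'`. Hence none of these is a `P`-game: `G + G + G` is not
`N`, its option `G + G + G'` is not `N` either, so `G + G + G` is not `O`, and it is not `P`.
-/

open PType

instance : Fintype PType where
  elems := {N, O, P, Q}
  complete x := by cases x <;> decide

theorem eq_Q_of_ne_N_of_ne_O_of_ne_P {a : PType} (hN : a ≠ N) (hO : a ≠ O) (hP : a ≠ P) :
    a = Q := by
  cases a <;> trivial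

open Classical in
noncomputable def optionTypes {ι : Type} (f : ι → G3) : Finset PType :=
  Finset.univ.filter fun a => ∃ i, typ (f i) = a

section optionTypes

variable {ι : Type} {f : ι → G3}

theorem mem_optionTypes {a : PType} : a ∈ optionTypes f ↔ ∃ i, typ (f i) = a := by
  simp [optionTypes]

theorem typ_mem_optionTypes (i : ι) : typ (f i) ∈ optionTypes f :=
  mem_optionTypes.2 ⟨i, rfl⟩

theorem forall_mem_optionTypes {p : PType → Prop} :
    (∀ a ∈ optionTypes f, p a) ↔ ∀ i, p (typ (f i)) := by
  simp [mem_optionTypes]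

theorem optionTypes_subset_singleton_iff {a : PType} :
    optionTypes f ⊆ {a} ↔ ∀ i, typ (f i) = a := by
  simp [Finset.subset_iff, mem_optionTypes]

theorem optionTypes_eq_singleton_iff {a : PType} :
    optionTypes f = {a} ↔ Nonempty ι ∧ ∀ i, typ (f i) = a := by
  rw [Finset.eq_singleton_iff_unique_mem, ← Finset.subset_singleton_iff',
    optionTypes_subset_singleton_iff, mem_optionTypes]
  exact and_congr_left fun h => ⟨fun ⟨i, _⟩ => ⟨i⟩, fun ⟨i⟩ => ⟨i, h i⟩⟩

end optionTypes

def outcome (S : Finset PType) : PType :=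
  if P ∈ S then N else if S = {N} then O else if S ⊆ {O} then P else Q

theorem outcome_eq_N_iff {S : Finset PType} : outcome S = N ↔ P ∈ S := by
  revert S; decide +kernel

theorem outcome_eq_O_iff {S : Finset PType} : outcome S = O ↔ S = {N} := by
  revert S; decide +kernel

theorem outcome_eq_P_iff {S : Finset PType} : outcome S = P ↔ S ⊆ {O} := by
  revert S; decide +kernel

theorem typ_mk (ι : Type) (f : ι → G3) : typ (mk ι f) = outcome (optionTypes f) := by
  classical
  rw [typ, outcome]
  exact if_congr mem_optionTypes.symm rfl <| if_congr optionTypes_eq_singleton_iff.symm rfl <|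
    if_congr optionTypes_subset_singleton_iff.symm rfl rfl

section typ

variable {ι : Type} {f : ι → G3}

theorem typ_eq_N_iff : typ (mk ι f) = N ↔ ∃ i, typ (f i) = P := by
  rw [typ_mk, outcome_eq_N_iff, mem_optionTypes]

theorem typ_eq_O_iff : typ (mk ι f) = O ↔ Nonempty ι ∧ ∀ i, typ (f i) = N := by
  rw [typ_mk, outcome_eq_O_iff, optionTypes_eq_singleton_iff]

theorem typ_eq_P_iff : typ (mk ι f) = P ↔ ∀ i, typ (f i) = O := by
  rw [typ_mk, outcome_eq_P_iff, optionTypes_subset_singleton_iff]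

theorem nonempty_of_typ_eq_Q (h : typ (mk ι f) = Q) : Nonempty ι := by
  by_contra hι
  have hP : typ (mk ι f) = P := typ_eq_P_iff.2 fun i => (hι ⟨i⟩).elim
  exact absurd (h.symm.trans hP) (by decide)

theorem typ_mk_congr {κ : Type} {g : κ → G3} (e : ι ≃ κ) (h : ∀ i, typ (f i) = typ (g (e i))) :
    typ (mk ι f) = typ (mk κ g) := by
  rw [typ_mk, typ_mk]
  congr 1
  ext a
  simp only [mem_optionTypes, h]
  exact e.exists_congr_left.trans (by simp)

end typ

theorem add_mk (ι : Type) (f : ι → G3) (κ : Type) (g : κ → G3) :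
    add (mk ι f) (mk κ g) =
      mk (ι ⊕ κ) (Sum.elim (fun i => add (f i) (mk κ g)) (fun j => add (mk ι f) (g j))) := by
  show mk _ _ = mk _ _
  congr
  funext x
  cases x <;> rfl

theorem typ_add_comm (G H : G3) : typ (add G H) = typ (add H G) := by
  induction G generalizing H with | mk ι f ihf =>
  induction H with | mk κ g ihg =>
  rw [add_mk, add_mk]
  exact typ_mk_congr (Equiv.sumComm ι κ) fun | .inl i => ihf i _ | .inr j => ihg j

theorem typ_add_assoc (A B C : G3) : typ (add (add A B) C) = typ (add A (add B C)) := by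
  induction A generalizing B C with | mk ι f ihf =>
  induction B generalizing C with | mk κ g ihg =>
  induction C with | mk μ h ihh =>
  simp only [add_mk]
  refine typ_mk_congr (Equiv.sumAssoc ι κ μ) ?_
  rintro ((i | j) | k)
  · simpa [add_mk] using ihf i (mk κ g) (mk μ h)
  · simpa [add_mk] using ihg j (mk μ h)
  · simpa [add_mk] using ihh k

theorem typ_add_eq_N_of_typ_add_mk_eq_O {A : G3} {κ : Type} {g : κ → G3}
    (h : typ (add A (mk κ g)) = O) (j : κ) : typ (add A (g j)) = N := by
  cases A with | mk ι f =>
  rw [add_mk, typ_eq_O_iff] at h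
  exact h.2 (.inr j)

def sumTypes : PType → PType → Finset PType
  | N, N => {N, O, P, Q}
  | N, O | O, N => {N, P, Q}
  | N, P | P, N | Q, N | N, Q => {N, Q}
  | O, O | Q, O | O, Q => {N, O, Q}
  | O, P | P, O => {O, Q}
  | P, P => {P, Q}
  | Q, P | P, Q => {Q}
  | Q, Q => {O, Q}

theorem Q_mem_sumTypes (a b : PType) : Q ∈ sumTypes a b := by
  cases a <;> cases b <;> decide

theorem P_notMem_sumTypes_Q_left (b : PType) : P ∉ sumTypes Q b := by
  cases b <;> decide

theorem P_notMem_sumTypes_Q_right (a : PType) : P ∉ sumTypes a Q := by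
  cases a <;> decide

/- The inductive step of `typ_add_mem_sumTypes`, one lemma for each possible non-`Q` type of
`G + H`: here `S` and `T` are the option-type sets of `G` and `H`. -/

theorem N_mem_sumTypes_outcome {S T : Finset PType}
    (h : (∃ a ∈ S, P ∈ sumTypes a (outcome T)) ∨ ∃ b ∈ T, P ∈ sumTypes (outcome S) b) :
    N ∈ sumTypes (outcome S) (outcome T) := by
  revert S T; decide +kernel

theorem O_mem_sumTypes_outcome {S T : Finset PType} (hne : S.Nonempty ∨ T.Nonempty)
    (hS : ∀ a ∈ S, N ∈ sumTypes a (outcome T)) (hT : ∀ b ∈ T, N ∈ sumTypes (outcome S) b) :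
    O ∈ sumTypes (outcome S) (outcome T) := by
  revert S T; decide +kernel

theorem P_mem_sumTypes_outcome {S T : Finset PType}
    (hS : ∀ a ∈ S, O ∈ sumTypes a (outcome T)) (hT : ∀ b ∈ T, O ∈ sumTypes (outcome S) b)
    (hST : ∀ a ∈ S, ∀ b ∈ T, N ∈ sumTypes a b) :
    P ∈ sumTypes (outcome S) (outcome T) := by
  revert S T; decide +kernel

theorem typ_add_mem_sumTypes (G H : G3) : typ (add G H) ∈ sumTypes (typ G) (typ H) := by
  induction G generalizing H with | mk ι f ihf =>
  induction H with | mk κ g ihg =>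
  have left (i : ι) :
      typ (add (f i) (mk κ g)) ∈ sumTypes (typ (f i)) (outcome (optionTypes g)) := by
    rw [← typ_mk]; exact ihf i _
  have right (j : κ) :
      typ (add (mk ι f) (g j)) ∈ sumTypes (outcome (optionTypes f)) (typ (g j)) := by
    rw [← typ_mk]; exact ihg j
  rw [typ_mk ι f, typ_mk κ g]
  cases hs : typ (add (mk ι f) (mk κ g)) with
  | N =>
    rw [add_mk, typ_eq_N_iff] at hs
    obtain ⟨i | j, h⟩ := hs
    · exact N_mem_sumTypes_outcome (.inl ⟨_, typ_mem_optionTypes i, h ▸ left i⟩)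
    · exact N_mem_sumTypes_outcome (.inr ⟨_, typ_mem_optionTypes j, h ▸ right j⟩)
  | O =>
    rw [add_mk, typ_eq_O_iff] at hs
    obtain ⟨⟨x⟩, h⟩ := hs
    refine O_mem_sumTypes_outcome ?_ (forall_mem_optionTypes.2 fun i => h (.inl i) ▸ left i)
      (forall_mem_optionTypes.2 fun j => h (.inr j) ▸ right j)
    rcases x with i | j
    exacts [.inl ⟨_, typ_mem_optionTypes i⟩, .inr ⟨_, typ_mem_optionTypes j⟩]
  | P =>
    rw [add_mk, typ_eq_P_iff] at hs
    refine P_mem_sumTypes_outcome (forall_mem_optionTypes.2 fun i => hs (.inl i) ▸ left i)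
      (forall_mem_optionTypes.2 fun j => hs (.inr j) ▸ right j)
      (forall_mem_optionTypes.2 fun i => forall_mem_optionTypes.2 fun j => ?_)
    exact typ_add_eq_N_of_typ_add_mk_eq_O (hs (.inl i)) j ▸ ihf i (g j)
  | Q => exact Q_mem_sumTypes _ _

theorem typ_add_ne_P_of_left {A : G3} (hA : typ A = Q) (B : G3) : typ (add A B) ≠ P :=
  fun hP => P_notMem_sumTypes_Q_left (typ B) (hA ▸ hP ▸ typ_add_mem_sumTypes A B)

theorem typ_add_ne_P_of_right (A : G3) {B : G3} (hB : typ B = Q) : typ (add A B) ≠ P :=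
  fun hP => P_notMem_sumTypes_Q_right (typ A) (hB ▸ hP ▸ typ_add_mem_sumTypes A B)

theorem typ_add_add_ne_P {A B C : G3} (h : typ A = Q ∨ typ B = Q ∨ typ C = Q) :
    typ (add (add A B) C) ≠ P := by
  rcases h with hA | hB | hC
  · rw [typ_add_assoc]
    exact typ_add_ne_P_of_left hA _
  · rw [typ_add_assoc, typ_add_comm, typ_add_assoc]
    exact typ_add_ne_P_of_left hB _
  · exact typ_add_ne_P_of_right _ hC

theorem typ_add_add_ne_N {A B : G3} (hA : typ A = Q) (hB : typ B = Q) (C : G3) :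
    typ (add (add A B) C) ≠ N := by
  cases A with | mk ι f =>
  cases B with | mk κ g =>
  cases C with | mk μ h =>
  rw [add_mk, add_mk, Ne, typ_eq_N_iff]
  rintro ⟨(i | j) | k, hP⟩
  · exact typ_add_add_ne_P (.inr (.inl hB)) hP
  · exact typ_add_add_ne_P (.inl hA) hP
  · simp only [Sum.elim_inr, ← add_mk] at hP
    exact typ_add_add_ne_P (.inl hA) hP

theorem Q_treble (G : G3) (hG : typ G = PType.Q) :
    typ (add (add G G) G) = PType.Q ∧ typ (add (add G G) G) ≠ PType.O := by
  have hO : typ (add (add G G) G) ≠ O := by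
    cases G with | mk ι f =>
    obtain ⟨i⟩ := nonempty_of_typ_eq_Q hG
    exact fun hO => typ_add_add_ne_N hG hG (f i) (typ_add_eq_N_of_typ_add_mk_eq_O hO i)
  have hN : typ (add (add G G) G) ≠ N := typ_add_add_ne_N hG hG G
  have hP : typ (add (add G G) G) ≠ P := typ_add_add_ne_P (.inl hG)
  exact ⟨eq_Q_of_ne_N_of_ne_O_of_ne_P hN hO hP, hO⟩

end G3
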